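/- Let f : ℝ² → ℝ be smooth with f_30 = 0 and f_40 = 0, where f_ij = ∂^{i+j}f/∂x^i∂y^j (0,0). Let a^f(x,y,p) = f_xx + 2f_xy·p + f_yy·p² and I(x,y,p) = (a^f)_x + p·(a^f)_y. Then the gradients at the origin are ∇a^f(0,0,0) = (0, f_21, 2f_11) and ∇I(0,0,0) = (0, f_31, 3f_21). Consequently these two gradients are linearly dependent if and only if 3f_21² − 2f_31·f_11 = 0; in particular, if f_11 ≠ 0 and 3f_21² − 2f_31·f_11 ≠ 0, the surfaces {a^f = 0} and {I = 0} are both smooth at the origin and intersect transversely there (so the flecnodal curve is smooth at the corresponding biflecnode). -/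

import Mathlib

/-!
At `p = 0` the asymptotic function `a^f` restricts to `f_xx` and the inflection function to
`f_xxx`, so the `x`- and `y`-components of the two gradients at the origin are `f₃₀, f₂₁` and
`f₄₀, f₃₁`. In `p`, `a^f` is a quadratic with linear coefficient `2f₁₁`, and `I` is a cubic whose
linear coefficient `2 ∂ₓf₁₁ + ∂_y f₂₀` equals `3f₂₁` by the symmetry of second derivatives. Both
gradients lie in the plane `x = 0`, so they are dependent exactly when the `2 × 2` determinant
`3f₂₁² − 2f₃₁f₁₁` vanishes.
-/

noncomputable section

/-- Partial derivative in the first variable of a function on `ℝ × ℝ`. -/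
def pdx (f : ℝ × ℝ → ℝ) (q : ℝ × ℝ) : ℝ := deriv (fun t => f (t, q.2)) q.1

/-- Partial derivative in the second variable of a function on `ℝ × ℝ`. -/
def pdy (f : ℝ × ℝ → ℝ) (q : ℝ × ℝ) : ℝ := deriv (fun t => f (q.1, t)) q.2

/-- Partial derivative in `x` of a function on `ℝ × ℝ × ℝ` (coordinates `(x, y, p)`). -/
def pDx (F : ℝ × ℝ × ℝ → ℝ) (q : ℝ × ℝ × ℝ) : ℝ := deriv (fun t => F (t, q.2.1, q.2.2)) q.1

/-- Partial derivative in `y` of a function on `ℝ × ℝ × ℝ` (coordinates `(x, y, p)`). -/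
def pDy (F : ℝ × ℝ × ℝ → ℝ) (q : ℝ × ℝ × ℝ) : ℝ := deriv (fun t => F (q.1, t, q.2.2)) q.2.1

/-- Partial derivative in `p` of a function on `ℝ × ℝ × ℝ` (coordinates `(x, y, p)`). -/
def pDp (F : ℝ × ℝ × ℝ → ℝ) (q : ℝ × ℝ × ℝ) : ℝ := deriv (fun t => F (q.1, q.2.1, t)) q.2.2

/-- The asymptotic IDE function `a^f(x,y,p) = f_xx + 2 f_xy p + f_yy p²`. -/
def aIDE (f : ℝ × ℝ → ℝ) (q : ℝ × ℝ × ℝ) : ℝ :=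
  pdx (pdx f) (q.1, q.2.1) + 2 * pdy (pdx f) (q.1, q.2.1) * q.2.2
    + pdy (pdy f) (q.1, q.2.1) * q.2.2 ^ 2

/-- The inflection function `I^F(x,y,p) = F_x + p·F_y`; its zero set is the flec-surface. -/
def inflFun (F : ℝ × ℝ × ℝ → ℝ) (q : ℝ × ℝ × ℝ) : ℝ := pDx F q + q.2.2 * pDy F q

section PartialDerivatives

variable {f : ℝ × ℝ → ℝ}

theorem hasDerivAt_pdx {x y : ℝ} (hf : DifferentiableAt ℝ f (x, y)) :
    HasDerivAt (fun t => f (t, y)) (pdx f (x, y)) x :=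
  (hf.comp x (differentiableAt_id.prodMk (differentiableAt_const y))).hasDerivAt

theorem hasDerivAt_pdy {x y : ℝ} (hf : DifferentiableAt ℝ f (x, y)) :
    HasDerivAt (fun t => f (x, t)) (pdy f (x, y)) y :=
  (hf.comp y ((differentiableAt_const x).prodMk differentiableAt_id)).hasDerivAt

theorem pdx_eq_fderiv (hf : Differentiable ℝ f) : pdx f = fun q => fderiv ℝ f q (1, 0) :=
  funext fun q => ((hf q).hasFDerivAt.comp_hasDerivAt q.1
    ((hasDerivAt_id q.1).prodMk (hasDerivAt_const q.1 q.2))).deriv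

theorem pdy_eq_fderiv (hf : Differentiable ℝ f) : pdy f = fun q => fderiv ℝ f q (0, 1) :=
  funext fun q => ((hf q).hasFDerivAt.comp_hasDerivAt q.2
    ((hasDerivAt_const q.2 q.1).prodMk (hasDerivAt_id q.2))).deriv

theorem ContDiff.pdx {m n : WithTop ℕ∞} (hf : ContDiff ℝ n f) (hmn : m + 1 ≤ n) :
    ContDiff ℝ m (pdx f) := by
  rw [pdx_eq_fderiv (hf.differentiable (ne_bot_of_le_ne_bot one_ne_zero (le_add_self.trans hmn)))]
  exact (hf.fderiv_right hmn).clm_apply contDiff_const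

theorem ContDiff.pdy {m n : WithTop ℕ∞} (hf : ContDiff ℝ n f) (hmn : m + 1 ≤ n) :
    ContDiff ℝ m (pdy f) := by
  rw [pdy_eq_fderiv (hf.differentiable (ne_bot_of_le_ne_bot one_ne_zero (le_add_self.trans hmn)))]
  exact (hf.fderiv_right hmn).clm_apply contDiff_const

theorem fderiv_fderiv_apply {q : ℝ × ℝ} (hf : DifferentiableAt ℝ (fderiv ℝ f) q)
    (v w : ℝ × ℝ) :
    fderiv ℝ (fun q => fderiv ℝ f q v) q w = fderiv ℝ (fderiv ℝ f) q w v := by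
  rw [fderiv_clm_apply hf (differentiableAt_const v)]
  simp

theorem pdx_pdy_comm (hf : ContDiff ℝ 2 f) (q : ℝ × ℝ) : pdx (pdy f) q = pdy (pdx f) q := by
  have hd : Differentiable ℝ f := hf.differentiable two_ne_zero
  have hd2 : DifferentiableAt ℝ (fderiv ℝ f) q :=
    (hf.fderiv_right (m := 1) le_rfl).differentiable one_ne_zero q
  rw [pdx_eq_fderiv ((hf.pdy (m := 1) le_rfl).differentiable one_ne_zero),
    pdy_eq_fderiv ((hf.pdx (m := 1) le_rfl).differentiable one_ne_zero),
    pdy_eq_fderiv hd, pdx_eq_fderiv hd]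
  beta_reduce
  rw [fderiv_fderiv_apply hd2, fderiv_fderiv_apply hd2]
  exact hf.contDiffAt.isSymmSndFDerivAt (by simp) _ _

end PartialDerivatives

def pSlice (F : ℝ × ℝ × ℝ → ℝ) (p : ℝ) (z : ℝ × ℝ) : ℝ := F (z.1, z.2, p)

theorem pDx_eq_pdx_pSlice (F : ℝ × ℝ × ℝ → ℝ) (x y p : ℝ) :
    pDx F (x, y, p) = pdx (pSlice F p) (x, y) := rfl

theorem pDy_eq_pdy_pSlice (F : ℝ × ℝ × ℝ → ℝ) (x y p : ℝ) :
    pDy F (x, y, p) = pdy (pSlice F p) (x, y) := rfl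

theorem pSlice_inflFun_zero (F : ℝ × ℝ × ℝ → ℝ) :
    pSlice (inflFun F) 0 = pdx (pSlice F 0) := by
  ext z
  simp [pSlice, inflFun, pDx_eq_pdx_pSlice]

def slopeQuadratic (A B C : ℝ × ℝ → ℝ) (q : ℝ × ℝ × ℝ) : ℝ :=
  A (q.1, q.2.1) + 2 * B (q.1, q.2.1) * q.2.2 + C (q.1, q.2.1) * q.2.2 ^ 2

theorem aIDE_eq_slopeQuadratic (f : ℝ × ℝ → ℝ) :
    aIDE f = slopeQuadratic (pdx (pdx f)) (pdy (pdx f)) (pdy (pdy f)) := rfl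

section SlopeQuadratic

variable {A B C : ℝ × ℝ → ℝ}

theorem pSlice_slopeQuadratic_zero : pSlice (slopeQuadratic A B C) 0 = A := by
  ext z
  simp [pSlice, slopeQuadratic]

theorem hasDerivAt_slopeQuadratic (x y p : ℝ) :
    HasDerivAt (fun t => slopeQuadratic A B C (x, y, t)) (2 * B (x, y) + 2 * C (x, y) * p) p :=
  ((((hasDerivAt_id p).const_mul (2 * B (x, y))).const_add (A (x, y))).fun_add
    ((hasDerivAt_pow 2 p).const_mul (C (x, y)))).congr_deriv (by simp; ring)

theorem pDp_slopeQuadratic_zero (x y : ℝ) :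
    pDp (slopeQuadratic A B C) (x, y, 0) = 2 * B (x, y) :=
  (hasDerivAt_slopeQuadratic x y 0).deriv.trans (by ring)

variable {x y : ℝ}

theorem pDx_slopeQuadratic (hA : DifferentiableAt ℝ A (x, y))
    (hB : DifferentiableAt ℝ B (x, y)) (hC : DifferentiableAt ℝ C (x, y)) (p : ℝ) :
    pDx (slopeQuadratic A B C) (x, y, p) = slopeQuadratic (pdx A) (pdx B) (pdx C) (x, y, p) :=
  (((hasDerivAt_pdx hA).add (((hasDerivAt_pdx hB).const_mul 2).mul_const p)).add
    ((hasDerivAt_pdx hC).mul_const (p ^ 2))).deriv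

theorem pDy_slopeQuadratic (hA : DifferentiableAt ℝ A (x, y))
    (hB : DifferentiableAt ℝ B (x, y)) (hC : DifferentiableAt ℝ C (x, y)) (p : ℝ) :
    pDy (slopeQuadratic A B C) (x, y, p) = slopeQuadratic (pdy A) (pdy B) (pdy C) (x, y, p) :=
  (((hasDerivAt_pdy hA).add (((hasDerivAt_pdy hB).const_mul 2).mul_const p)).add
    ((hasDerivAt_pdy hC).mul_const (p ^ 2))).deriv

theorem pDp_inflFun_slopeQuadratic_zero (hA : DifferentiableAt ℝ A (x, y))
    (hB : DifferentiableAt ℝ B (x, y)) (hC : DifferentiableAt ℝ C (x, y)) :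
    pDp (inflFun (slopeQuadratic A B C)) (x, y, 0) = 2 * pdx B (x, y) + pdy A (x, y) := by
  have h := (hasDerivAt_slopeQuadratic (A := pdx A) (B := pdx B) (C := pdx C) x y 0).fun_add
    ((hasDerivAt_id' 0).fun_mul
      (hasDerivAt_slopeQuadratic (A := pdy A) (B := pdy B) (C := pdy C) x y 0))
  have e : (fun t => inflFun (slopeQuadratic A B C) (x, y, t)) = fun t =>
      slopeQuadratic (pdx A) (pdx B) (pdx C) (x, y, t)
        + t * slopeQuadratic (pdy A) (pdy B) (pdy C) (x, y, t) := by
    ext t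
    rw [inflFun, pDx_slopeQuadratic hA hB hC, pDy_slopeQuadratic hA hB hC]
  rw [pDp, e, h.deriv]
  simp [slopeQuadratic]

end SlopeQuadratic

section Dependence

open Matrix

variable {K : Type*} [CommRing K]

theorem smul_add_smul_eq_zero_iff_mulVec (a b c d s t : K) :
    s • ((0 : K), a, b) + t • ((0 : K), c, d) = 0 ↔ !![a, c; b, d] *ᵥ ![s, t] = 0 := by
  simp [Prod.ext_iff, funext_iff, Fin.forall_fin_two, mul_comm]

theorem exists_smul_add_smul_eq_zero_iff [IsDomain K] (a b c d : K) :
    (∃ s t : K, (s, t) ≠ (0, 0) ∧ s • ((0 : K), a, b) + t • ((0 : K), c, d) = 0) ↔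
      a * d - b * c = 0 := by
  rw [mul_comm b c, ← det_fin_two_of, ← exists_mulVec_eq_zero_iff]
  constructor
  · rintro ⟨s, t, hst, h⟩
    exact ⟨![s, t], by simpa [funext_iff, Fin.forall_fin_two] using hst,
      (smul_add_smul_eq_zero_iff_mulVec a b c d s t).1 h⟩
  · rintro ⟨v, hv, h⟩
    refine ⟨v 0, v 1, by simpa [funext_iff, Fin.forall_fin_two] using hv,
      (smul_add_smul_eq_zero_iff_mulVec a b c d _ _).2 ?_⟩
    rwa [← FinVec.etaExpand_eq v] at h

theorem ne_zero_of_det_ne_zero {a b c d : K} (h : a * d - b * c ≠ 0) :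
    ((0 : K), a, b) ≠ 0 ∧ ((0 : K), c, d) ≠ 0 := by
  constructor <;> intro hv <;> simp [Prod.ext_iff] at hv <;> simp [hv] at h

end Dependence

/-- key gradient computation in the proof of Theorem 3: if
`f₃₀ = f₄₀ = 0`, then `∇a^f(0) = (0, f₂₁, 2f₁₁)` and `∇I(0) = (0, f₃₁, 3f₂₁)`; these are
linearly dependent iff `3f₂₁² − 2f₃₁f₁₁ = 0`; in particular, if `f₁₁ ≠ 0` and
`3f₂₁² − 2f₃₁f₁₁ ≠ 0`, the surfaces `{a^f = 0}` and `{I = 0}` are smooth at the origin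
(nonzero gradients) and intersect transversely there (independent gradients). -/
theorem biflecnode_gradients (f : ℝ × ℝ → ℝ) (hf : ContDiff ℝ (⊤ : ℕ∞) f)
    (h30 : pdx (pdx (pdx f)) (0, 0) = 0)
    (h40 : pdx (pdx (pdx (pdx f))) (0, 0) = 0) :
    (pDx (aIDE f) (0, 0, 0), pDy (aIDE f) (0, 0, 0), pDp (aIDE f) (0, 0, 0)) =
      ((0 : ℝ), pdy (pdx (pdx f)) (0, 0), 2 * pdy (pdx f) (0, 0)) ∧
    (pDx (inflFun (aIDE f)) (0, 0, 0), pDy (inflFun (aIDE f)) (0, 0, 0),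
        pDp (inflFun (aIDE f)) (0, 0, 0)) =
      ((0 : ℝ), pdy (pdx (pdx (pdx f))) (0, 0), 3 * pdy (pdx (pdx f)) (0, 0)) ∧
    ((∃ s t : ℝ, (s, t) ≠ ((0 : ℝ), (0 : ℝ)) ∧
        s • (((0 : ℝ), pdy (pdx (pdx f)) (0, 0), 2 * pdy (pdx f) (0, 0)) : ℝ × ℝ × ℝ)
          + t • (((0 : ℝ), pdy (pdx (pdx (pdx f))) (0, 0),
              3 * pdy (pdx (pdx f)) (0, 0)) : ℝ × ℝ × ℝ) = 0) ↔
      3 * (pdy (pdx (pdx f)) (0, 0)) ^ 2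
        - 2 * pdy (pdx (pdx (pdx f))) (0, 0) * pdy (pdx f) (0, 0) = 0) ∧
    (pdy (pdx f) (0, 0) ≠ 0 →
      3 * (pdy (pdx (pdx f)) (0, 0)) ^ 2
          - 2 * pdy (pdx (pdx (pdx f))) (0, 0) * pdy (pdx f) (0, 0) ≠ 0 →
      ((((0 : ℝ), pdy (pdx (pdx f)) (0, 0), 2 * pdy (pdx f) (0, 0)) : ℝ × ℝ × ℝ) ≠ 0 ∧
        (((0 : ℝ), pdy (pdx (pdx (pdx f))) (0, 0),
            3 * pdy (pdx (pdx f)) (0, 0)) : ℝ × ℝ × ℝ) ≠ 0 ∧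
        ¬ ∃ s t : ℝ, (s, t) ≠ ((0 : ℝ), (0 : ℝ)) ∧
          s • (((0 : ℝ), pdy (pdx (pdx f)) (0, 0), 2 * pdy (pdx f) (0, 0)) : ℝ × ℝ × ℝ)
            + t • (((0 : ℝ), pdy (pdx (pdx (pdx f))) (0, 0),
                3 * pdy (pdx (pdx f)) (0, 0)) : ℝ × ℝ × ℝ) = 0)) := by
  have hf3 : ContDiff ℝ 3 f := hf.of_le (WithTop.coe_le_coe.2 le_top)
  have hfx : ContDiff ℝ 2 (pdx f) := hf3.pdx (by norm_num)
  have hfy : ContDiff ℝ 2 (pdy f) := hf3.pdy (by norm_num)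
  have hA : DifferentiableAt ℝ (pdx (pdx f)) (0, 0) :=
    (hfx.pdx (m := 1) le_rfl).differentiable one_ne_zero (0, 0)
  have hB : DifferentiableAt ℝ (pdy (pdx f)) (0, 0) :=
    (hfx.pdy (m := 1) le_rfl).differentiable one_ne_zero (0, 0)
  have hC : DifferentiableAt ℝ (pdy (pdy f)) (0, 0) :=
    (hfy.pdy (m := 1) le_rfl).differentiable one_ne_zero (0, 0)
  have gradA : (pDx (aIDE f) (0, 0, 0), pDy (aIDE f) (0, 0, 0), pDp (aIDE f) (0, 0, 0)) =
      ((0 : ℝ), pdy (pdx (pdx f)) (0, 0), 2 * pdy (pdx f) (0, 0)) := by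
    rw [pDx_eq_pdx_pSlice, pDy_eq_pdy_pSlice, aIDE_eq_slopeQuadratic,
      pSlice_slopeQuadratic_zero, pDp_slopeQuadratic_zero, h30]
  have gradI : (pDx (inflFun (aIDE f)) (0, 0, 0), pDy (inflFun (aIDE f)) (0, 0, 0),
      pDp (inflFun (aIDE f)) (0, 0, 0)) =
      ((0 : ℝ), pdy (pdx (pdx (pdx f))) (0, 0), 3 * pdy (pdx (pdx f)) (0, 0)) := by
    rw [pDx_eq_pdx_pSlice, pDy_eq_pdy_pSlice, pSlice_inflFun_zero, aIDE_eq_slopeQuadratic,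
      pDp_inflFun_slopeQuadratic_zero hA hB hC, pSlice_slopeQuadratic_zero, pdx_pdy_comm hfx, h40]
    congr 2; ring
  set f11 := pdy (pdx f) (0, 0)
  set f21 := pdy (pdx (pdx f)) (0, 0)
  set f31 := pdy (pdx (pdx (pdx f))) (0, 0)
  have hdet : f21 * (3 * f21) - 2 * f11 * f31 = 3 * f21 ^ 2 - 2 * f31 * f11 := by ring
  rw [exists_smul_add_smul_eq_zero_iff, hdet]
  refine ⟨gradA, gradI, Iff.rfl, fun _ h => ?_⟩
  obtain ⟨hgradA, hgradI⟩ := ne_zero_of_det_ne_zero (hdet ▸ h)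
  exact ⟨hgradA, hgradI, h⟩
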